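/- arXiv:2311.03351 — 2 statements merged into one kernel-verified Lean document; each statement's English description precedes it below -/
import Mathlib

section
/- Let (A, 𝒜, ν) be a measure space and let f₁, …, fₙ : A → ℝ (n ≥ 1) be nonnegative measurable probability densities with respect to ν, i.e. ∫ f_j dν = 1 for each j. Fix i ∈ {1,…,n}, set m(a) := max_{1≤j≤n} f_j(a) and Z := ∫ m dν, and assume Z < ∞ and that a ↦ f_i(a)·log( f_i(a)/m(a) ) (interpreted as 0 where f_i(a) = 0) is ν-integrable. Then ∫ f_i(a)·log( f_i(a) / ( m(a)/Z ) ) dν(a) ≤ ∫ f_i(a)·log( f_i(a)/m(a) ) dν(a) + log n, where both integrands are interpreted as 0 on {f_i = 0}. -/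
/-!
Away from `{f i = 0}` we have `log (f i / (m / Z)) = log (f i / m) + log Z`, so the left-hand
side is `∫ f i * log (f i / m) + log Z` because `∫ f i = 1`. It remains to see `Z ≤ n`, which
holds since `m ≤ ∑ j, f j` pointwise and each `f j` integrates to `1`.
-/

open MeasureTheory

section

variable {α ι : Type*} [MeasurableSpace α] {μ : Measure α}

theorem integral_iSup_le_sum_integral [Fintype ι] {f : ι → α → ℝ}
    (hf : ∀ j, Integrable (f j) μ) (hf0 : ∀ j a, 0 ≤ f j a) :
    ∫ a, ⨆ j, f j a ∂μ ≤ ∑ j, ∫ a, f j a ∂μ := by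
  rw [← integral_finsetSum _ fun j _ => hf j]
  refine integral_mono_of_nonneg (ae_of_all _ fun a => Real.iSup_nonneg (hf0 · a))
    (integrable_finsetSum _ fun j _ => hf j) (ae_of_all _ fun a => ?_)
  exact Real.iSup_le (fun j => Finset.single_le_sum (fun k _ => hf0 k a) (Finset.mem_univ j))
    (Finset.sum_nonneg fun k _ => hf0 k a)

theorem integral_iSup_le_card_of_integral_eq_one [Fintype ι] {f : ι → α → ℝ}
    (hf0 : ∀ j a, 0 ≤ f j a) (hf1 : ∀ j, ∫ a, f j a ∂μ = 1) :
    ∫ a, ⨆ j, f j a ∂μ ≤ Fintype.card ι := by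
  have hf : ∀ j, Integrable (f j) μ := fun j =>
    Integrable.of_integral_ne_zero (by simp [hf1 j])
  simpa [hf1] using integral_iSup_le_sum_integral hf hf0

end

theorem Real.mul_log_div_div_eq_add {x m Z : ℝ} (hx : 0 ≤ x) (hxm : x ≤ m) (hZ : Z ≠ 0) :
    x * Real.log (x / (m / Z)) = x * Real.log (x / m) + x * Real.log Z := by
  rcases hx.eq_or_lt with rfl | hx
  · simp
  have hm : m ≠ 0 := (hx.trans_le hxm).ne'
  rw [div_div_eq_mul_div, mul_div_right_comm, Real.log_mul (by positivity) hZ, mul_add]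

theorem klDiv_from_normalized_max_upper_bound_general {A : Type*} [MeasurableSpace A]
    (ν : Measure A) (n : ℕ) (f : Fin n → A → ℝ)
    (hnonneg : ∀ j a, 0 ≤ f j a)
    (hprob : ∀ j, ∫ a, f j a ∂ν = 1)
    (i : Fin n)
    (Z : ℝ) (hZ : Z = ∫ a, ⨆ j, f j a ∂ν)
    (hmaxint : Integrable (fun a => ⨆ j, f j a) ν)
    (hint : Integrable (fun a => f i a * Real.log (f i a / ⨆ j, f j a)) ν) :
    ∫ a, f i a * Real.log (f i a / ((⨆ j, f j a) / Z)) ∂ν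
      ≤ (∫ a, f i a * Real.log (f i a / ⨆ j, f j a) ∂ν) + Real.log n := by
  have hfi : Integrable (f i) ν := Integrable.of_integral_ne_zero (by simp [hprob i])
  have hle : ∀ a, f i a ≤ ⨆ j, f j a := fun a => le_ciSup (Set.finite_range (f · a)).bddAbove i
  have hZ1 : 1 ≤ Z := hZ ▸ hprob i ▸ integral_mono hfi hmaxint hle
  have hZn : Z ≤ n := by
    simpa [hZ] using integral_iSup_le_card_of_integral_eq_one hnonneg hprob
  calc ∫ a, f i a * Real.log (f i a / ((⨆ j, f j a) / Z)) ∂ν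
      = ∫ a, f i a * Real.log (f i a / ⨆ j, f j a) + f i a * Real.log Z ∂ν := by
        congr with a
        exact Real.mul_log_div_div_eq_add (hnonneg i a) (hle a) (by positivity)
    _ = (∫ a, f i a * Real.log (f i a / ⨆ j, f j a) ∂ν) + Real.log Z := by
        rw [integral_add hint (hfi.mul_const _), integral_mul_const, hprob i, one_mul]
    _ ≤ _ := by gcongr

/-- **upper bound of Appendix A.1 of the paper.** For probability
densities `f 1, …, f n` (`n ≥ 1`), the KL divergence of `f i` from the normalized
pointwise maximum `(⨆ j, f j) / Z`, where `Z = ∫ ⨆ j, f j dν`, is bounded above by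
`∫ f i * log (f i / ⨆ j, f j) dν + log n`.  (The integrands vanish on `{f i = 0}` since
they carry the factor `f i`; the assumption `Z < ∞` is expressed by integrability of the
pointwise maximum.) -/
theorem klDiv_from_normalized_max_upper_bound {A : Type*} [MeasurableSpace A]
    (ν : Measure A) (n : ℕ) (hn : 1 ≤ n) (f : Fin n → A → ℝ)
    (hmeas : ∀ j, Measurable (f j))
    (hnonneg : ∀ j a, 0 ≤ f j a)
    (hprob : ∀ j, ∫ a, f j a ∂ν = 1)
    (i : Fin n)
    (Z : ℝ) (hZ : Z = ∫ a, ⨆ j, f j a ∂ν)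
    (hmaxint : Integrable (fun a => ⨆ j, f j a) ν)
    (hint : Integrable (fun a => f i a * Real.log (f i a / ⨆ j, f j a)) ν) :
    ∫ a, f i a * Real.log (f i a / ((⨆ j, f j a) / Z)) ∂ν
      ≤ (∫ a, f i a * Real.log (f i a / ⨆ j, f j a) ∂ν) + Real.log n :=
  klDiv_from_normalized_max_upper_bound_general ν n f hnonneg hprob i Z hZ hmaxint hint
end

section
/- Let X be a measurable space, let κ₁ and κ₂ be Markov kernels from X to X, and let δ ≥ 0 be such that for every probability measure ν on X, ‖νκ₁ − νκ₂‖_TV ≤ δ. Then for every probability measure μ on X and every t ∈ ℕ, ‖μκ₁^t − μκ₂^t‖_TV ≤ t·δ, where λκ denotes the bind E ↦ ∫ κ(x)(E) dλ(x), λκ^t its t-fold iterate, and ‖·‖_TV the total variation norm of a signed measure. -/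
open MeasureTheory ProbabilityTheory

/-! Total variation distance satisfies the triangle inequality and does not increase under a
Markov kernel `κ`: if `μ - ν = p - n` is the Jordan decomposition, then `μκ + nκ = pκ + νκ`, so
`μκ - νκ = pκ - nκ` has variation at most `pκ(X) + nκ(X) = p(X) + n(X) = ‖μ - ν‖_TV`.
Therefore `‖μκ₁^(t+1) - μκ₂^(t+1)‖_TV` is at most
`‖(μκ₁^t)κ₁ - (μκ₂^t)κ₁‖_TV + ‖(μκ₂^t)κ₁ - (μκ₂^t)κ₂‖_TV ≤ ‖μκ₁^t - μκ₂^t‖_TV + δ`,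
and induction on `t` gives `t δ`. -/

/-- Pushing a finite measure through a Markov kernel yields a finite measure. -/
instance bindIsFiniteMeasure {X : Type*} [MeasurableSpace X] (μ : Measure X)
    [IsFiniteMeasure μ] (κ : Kernel X X) [IsMarkovKernel κ] :
    IsFiniteMeasure (μ.bind κ) := by
  constructor
  rw [Measure.bind_apply MeasurableSet.univ (Kernel.measurable κ).aemeasurable]
  calc ∫⁻ x, (κ x) Set.univ ∂μ = ∫⁻ _, 1 ∂μ := by simp
    _ = μ Set.univ := by simp
    _ < ⊤ := measure_lt_top μ _

/-- The `t`-fold iterated bind `μ κ^t` of a measure `μ` along a kernel `κ`: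
`μκ^0 = μ` and `μκ^(t+1) = (μκ^t)κ`. -/
noncomputable def iterBind {X : Type*} [MeasurableSpace X] (μ : Measure X)
    (κ : Kernel X X) : ℕ → Measure X
  | 0 => μ
  | t + 1 => (iterBind μ κ t).bind κ

instance iterBindIsFiniteMeasure {X : Type*} [MeasurableSpace X] (μ : Measure X)
    [IsFiniteMeasure μ] (κ : Kernel X X) [IsMarkovKernel κ] (t : ℕ) :
    IsFiniteMeasure (iterBind μ κ t) := by
  induction t with
  | zero => exact inferInstanceAs (IsFiniteMeasure μ)
  | succ t ih => exact @bindIsFiniteMeasure X _ (iterBind μ κ t) ih κ _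

/-- The total variation norm `‖μ − ν‖_TV` of the difference of two finite measures:
the total mass of the total variation of the signed measure `μ − ν`. -/
noncomputable def tvDist {X : Type*} [MeasurableSpace X] (μ ν : Measure X)
    [IsFiniteMeasure μ] [IsFiniteMeasure ν] : ℝ :=
  ((μ.toSignedMeasure - ν.toSignedMeasure).totalVariation Set.univ).toReal

namespace MeasureTheory

variable {X : Type*} [MeasurableSpace X]

lemma Measure.toSignedMeasure_sub_eq_sub_iff {μ₁ ν₁ μ₂ ν₂ : Measure X} [IsFiniteMeasure μ₁]
    [IsFiniteMeasure ν₁] [IsFiniteMeasure μ₂] [IsFiniteMeasure ν₂] :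
    μ₁.toSignedMeasure - ν₁.toSignedMeasure = μ₂.toSignedMeasure - ν₂.toSignedMeasure ↔
      μ₁ + ν₂ = μ₂ + ν₁ := by
  rw [sub_eq_sub_iff_add_eq_add, ← toSignedMeasure_add, ← toSignedMeasure_add,
    toSignedMeasure_eq_toSignedMeasure_iff]

instance SignedMeasure.isFiniteMeasure_variation (s : SignedMeasure X) :
    IsFiniteMeasure s.variation := by
  rw [← s.totalVariation_eq_variation]
  infer_instance

lemma Measure.variation_toSignedMeasure_sub_le (μ ν : Measure X) [IsFiniteMeasure μ]
    [IsFiniteMeasure ν] : (μ.toSignedMeasure - ν.toSignedMeasure).variation ≤ μ + ν := by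
  simpa using VectorMeasure.variation_sub_le (μ := μ.toSignedMeasure) (ν := ν.toSignedMeasure)

end MeasureTheory

section TotalVariationDistance

variable {X Y : Type*} [MeasurableSpace X] [MeasurableSpace Y]

lemma tvDist_eq_variation (μ ν : Measure X) [IsFiniteMeasure μ] [IsFiniteMeasure ν] :
    tvDist μ ν = ((μ.toSignedMeasure - ν.toSignedMeasure).variation Set.univ).toReal := by
  rw [tvDist, SignedMeasure.totalVariation_eq_variation]

lemma tvDist_self (μ : Measure X) [IsFiniteMeasure μ] : tvDist μ μ = 0 := by
  simp [tvDist, SignedMeasure.totalVariation_zero]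

lemma tvDist_triangle (μ ν ρ : Measure X) [IsFiniteMeasure μ] [IsFiniteMeasure ν]
    [IsFiniteMeasure ρ] : tvDist μ ρ ≤ tvDist μ ν + tvDist ν ρ := by
  simp only [tvDist_eq_variation]
  rw [← sub_add_sub_cancel μ.toSignedMeasure ν.toSignedMeasure,
    ← ENNReal.toReal_add (measure_ne_top _ _) (measure_ne_top _ _), ← Measure.add_apply]
  exact ENNReal.toReal_mono (measure_ne_top _ _) (VectorMeasure.variation_add_le Set.univ)

lemma tvDist_bind_le (μ ν : Measure X) [IsFiniteMeasure μ] [IsFiniteMeasure ν]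
    (κ : Kernel X Y) [IsMarkovKernel κ] : tvDist (μ.bind κ) (ν.bind κ) ≤ tvDist μ ν := by
  set j := (μ.toSignedMeasure - ν.toSignedMeasure).toJordanDecomposition
  have hjordan : μ + j.negPart = j.posPart + ν :=
    Measure.toSignedMeasure_sub_eq_sub_iff.1
      (SignedMeasure.toSignedMeasure_toJordanDecomposition _).symm
  have hbind : (μ.bind κ).toSignedMeasure - (ν.bind κ).toSignedMeasure =
      (j.posPart.bind κ).toSignedMeasure - (j.negPart.bind κ).toSignedMeasure :=
    Measure.toSignedMeasure_sub_eq_sub_iff.2 <| by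
      rw [← Measure.comp_add, ← Measure.comp_add, hjordan]
  rw [tvDist_eq_variation, hbind, tvDist, SignedMeasure.totalVariation]
  calc _ ≤ ((j.posPart.bind κ + j.negPart.bind κ) Set.univ).toReal :=
        ENNReal.toReal_mono (measure_ne_top _ _)
          (Measure.variation_toSignedMeasure_sub_le _ _ Set.univ)
    _ = ((j.posPart + j.negPart) Set.univ).toReal := by
        simp only [Measure.add_apply, Measure.comp_apply_univ]

end TotalVariationDistance

instance isProbabilityMeasure_iterBind {X : Type*} [MeasurableSpace X] (μ : Measure X)
    [IsProbabilityMeasure μ] (κ : Kernel X X) [IsMarkovKernel κ] (t : ℕ) :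
    IsProbabilityMeasure (iterBind μ κ t) := by
  induction t with
  | zero => assumption
  | succ t ih => exact inferInstanceAs (IsProbabilityMeasure ((iterBind μ κ t).bind κ))

theorem tvDist_iterBind_le_mul_general {X : Type*} [MeasurableSpace X]
    (κ₁ κ₂ : Kernel X X) [IsMarkovKernel κ₁] [IsMarkovKernel κ₂]
    (δ : ℝ)
    (hstep : ∀ (ν : Measure X) [IsProbabilityMeasure ν],
      tvDist (ν.bind κ₁) (ν.bind κ₂) ≤ δ)
    (μ : Measure X) [IsProbabilityMeasure μ] (t : ℕ) :
    tvDist (iterBind μ κ₁ t) (iterBind μ κ₂ t) ≤ t * δ := by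
  induction t with
  | zero => simp [iterBind, tvDist_self]
  | succ t ih =>
    calc tvDist (iterBind μ κ₁ (t + 1)) (iterBind μ κ₂ (t + 1))
        ≤ tvDist ((iterBind μ κ₁ t).bind κ₁) ((iterBind μ κ₂ t).bind κ₁)
          + tvDist ((iterBind μ κ₂ t).bind κ₁) ((iterBind μ κ₂ t).bind κ₂) :=
          tvDist_triangle _ _ _
      _ ≤ tvDist (iterBind μ κ₁ t) (iterBind μ κ₂ t) + δ :=
          add_le_add (tvDist_bind_le _ _ _) (hstep _)
      _ ≤ (t + 1 : ℕ) * δ := by push_cast; linarith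

/-- If the one-step total variation discrepancy between two Markov
kernels `κ₁`, `κ₂` is uniformly bounded by `δ` over all initial probability measures,
then the `t`-step distributions satisfy `‖μκ₁^t − μκ₂^t‖_TV ≤ t·δ`. -/
theorem tvDist_iterBind_le_mul {X : Type*} [MeasurableSpace X]
    (κ₁ κ₂ : Kernel X X) [IsMarkovKernel κ₁] [IsMarkovKernel κ₂]
    (δ : ℝ) (hδ : 0 ≤ δ)
    (hstep : ∀ (ν : Measure X) [IsProbabilityMeasure ν],
      tvDist (ν.bind κ₁) (ν.bind κ₂) ≤ δ)
    (μ : Measure X) [IsProbabilityMeasure μ] (t : ℕ) :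
    tvDist (iterBind μ κ₁ t) (iterBind μ κ₂ t) ≤ t * δ :=
  tvDist_iterBind_le_mul_general κ₁ κ₂ δ hstep μ t
end
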